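/- Equivalence of the dual filter and batch smoothing (methods equivalence): under the stochastic model, assume Σ_{ZZ} := Cov(Z_{0:T-1}) ∈ ℝ^{Tm×Tm} is invertible, and let 𝒲 := Cov(X_T, Z_{0:T-1}) Σ_{ZZ}^{-1} ∈ ℝ^{d×Tm} with blocks 𝒲_t ∈ ℝ^{d×m} for 0 ≤ t ≤ T-1. For f ∈ ℝ^d, define the control û ∈ 𝒰 by û_t := − 𝒲_t^⊤ f. Then û is a global minimizer of the dual cost J_T(·; f) over 𝒰, and the corresponding estimator S_T = y_0^⊤ μ_0 − Σ_{t=0}^{T-1} û_t^⊤ Z_t (with y the dual-state solution for (û, f)) equals the affine MMSE prediction f^⊤ ( E[X_T] + 𝒲 (Z_{0:T-1} − E[Z_{0:T-1}]) ) almost surely. -/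

import Mathlib

open Matrix Finset MeasureTheory ProbabilityTheory

/-- The backward difference equation (dual control system): `y_T = f` and
`y_t = ∑_{s=1}^{T-t} A_{t+s,s}ᵀ y_{t+s} + C_tᵀ u_t` for every `0 ≤ t ≤ T-1`. -/
def IsDualSol (T d m : ℕ) (A : ℕ → ℕ → Matrix (Fin d) (Fin d) ℝ)
    (C : ℕ → Matrix (Fin m) (Fin d) ℝ) (u : ℕ → Fin m → ℝ) (f : Fin d → ℝ)
    (y : ℕ → Fin d → ℝ) : Prop :=
  y T = f ∧
    ∀ t < T, y t =
      (∑ s ∈ Finset.Icc 1 (T - t), ((A (t + s) s)ᵀ).mulVec (y (t + s)))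
        + ((C t)ᵀ).mulVec (u t)

/-- The dual optimal control cost
`J_T(u; f) = ½ y_0ᵀ Σ0 y_0 + ∑_{t=1}^{T} ½ y_tᵀ Q_t y_t + ∑_{t=0}^{T-1} ½ u_tᵀ R_t u_t`,
expressed in terms of the dual-state solution `y` for `(u, f)`. -/
noncomputable def dualCost (T d m : ℕ) (Sig0 : Matrix (Fin d) (Fin d) ℝ)
    (Q : ℕ → Matrix (Fin d) (Fin d) ℝ) (R : ℕ → Matrix (Fin m) (Fin m) ℝ)
    (y : ℕ → Fin d → ℝ) (u : ℕ → Fin m → ℝ) : ℝ :=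
  (1 / 2) * (y 0 ⬝ᵥ Sig0.mulVec (y 0))
    + (∑ t ∈ Finset.Icc 1 T, (1 / 2) * (y t ⬝ᵥ (Q t).mulVec (y t)))
    + ∑ t ∈ Finset.range T, (1 / 2) * (u t ⬝ᵥ (R t).mulVec (u t))

/-- Values of the family of primitive random vectors `(X_0, B_1, …, B_T, W_0, …, W_{T-1})`. -/
def noiseType (d m : ℕ) {T : ℕ} : Fin (T + 1) ⊕ Fin T → Type :=
  Sum.elim (fun _ => Fin d → ℝ) (fun _ => Fin m → ℝ)

/-- The canonical measurable-space structure on each member of the family. -/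
def noiseMS (T d m : ℕ) : (i : Fin (T + 1) ⊕ Fin T) → MeasurableSpace (noiseType d m i)
  | Sum.inl _ => (inferInstance : MeasurableSpace (Fin d → ℝ))
  | Sum.inr _ => (inferInstance : MeasurableSpace (Fin m → ℝ))

/-- The family of primitive random vectors `(X_0, B_1, …, B_T, W_0, …, W_{T-1})`. -/
def noiseFamily (T d m : ℕ) {Ω : Type*} (X0 : Ω → Fin d → ℝ)
    (B : ℕ → Ω → Fin d → ℝ) (W : ℕ → Ω → Fin m → ℝ) :
    (i : Fin (T + 1) ⊕ Fin T) → Ω → noiseType d m i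
  | Sum.inl j => if j.val = 0 then X0 else B j.val
  | Sum.inr t => W t.val

/-- Entrywise mean of a random vector. -/
noncomputable def meanVec {Ω : Type*} [MeasurableSpace Ω] (μ : Measure Ω)
    {n : Type*} (V : Ω → n → ℝ) : n → ℝ :=
  fun i => ∫ ω, V ω i ∂μ

/-- Cross-covariance matrix `Cov(V, Z) = E[(V − E V)(Z − E Z)ᵀ]` of two random
vectors, computed entrywise. -/
noncomputable def covMat {Ω : Type*} [MeasurableSpace Ω] (μ : Measure Ω)
    {n k : Type*} (V : Ω → n → ℝ) (Z : Ω → k → ℝ) : Matrix n k ℝ :=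
  Matrix.of fun i j =>
    ∫ ω, (V ω i - meanVec μ V i) * (Z ω j - meanVec μ Z j) ∂μ

/-!
Summing the state recursion against the backward difference equation by parts gives, for every
control `u` with dual state `y`, the pathwise identity
`fᵀ X_T + ∑_t u_tᵀ Z_t = y_0ᵀ X_0 + ∑_{t ≥ 1} y_tᵀ B_t + ∑_t u_tᵀ W_t`.
The right side is a sum of independent terms, so its variance is `2 J_T(u; f)` and its mean is
`y_0ᵀ μ_0`. Minimising `J_T` is therefore minimising the error variance of the linear predictor
`-∑_t u_tᵀ Z_t` of `fᵀ X_T`, and the batch weights `𝒲` solve this through the normal equations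
`𝒲 Σ_ZZ = Cov(X_T, Z)`; taking means identifies the constant term of the estimator.
-/

lemma sum_Icc_one_eq_sum_range {M : Type*} [AddCommMonoid M] (T : ℕ) (F : ℕ → M) :
    ∑ t ∈ Icc 1 T, F t = ∑ t ∈ range T, F (t + 1) := by
  rw [← Finset.Ico_add_one_right_eq_Icc, Finset.sum_Ico_eq_sum_range]
  simp only [add_comm, add_tsub_cancel_right]

lemma sum_Icc_sum_Icc_eq_sum_range_sum_Icc {M : Type*} [AddCommMonoid M] (T : ℕ)
    (g : ℕ → ℕ → M) :
    ∑ t ∈ Icc 1 T, ∑ s ∈ Icc 1 t, g t s = ∑ r ∈ range T, ∑ s ∈ Icc 1 (T - r), g (r + s) s := by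
  rw [Finset.sum_sigma', Finset.sum_sigma']
  refine Finset.sum_nbij' (fun p => ⟨p.1 - p.2, p.2⟩) (fun p => ⟨p.1 + p.2, p.2⟩)
    ?_ ?_ ?_ ?_ ?_ <;> rintro ⟨a, b⟩ h <;> simp_all <;> omega

lemma sum_fin_succ_sum_fin {M : Type*} [AddCommMonoid M] {T : ℕ}
    (g : Fin (T + 1) ⊕ Fin T → M) (c : M) (a b : ℕ → M) (h0 : g (.inl 0) = c)
    (ha : ∀ j : Fin T, g (.inl j.succ) = a (j + 1)) (hb : ∀ t : Fin T, g (.inr t) = b t) :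
    ∑ i, g i = c + ∑ t ∈ Icc 1 T, a t + ∑ t ∈ range T, b t := by
  rw [Fintype.sum_sum_type, Fin.sum_univ_succ, h0, sum_Icc_one_eq_sum_range]
  simp only [ha, hb, Fin.sum_univ_eq_sum_range (fun t => a (t + 1)),
    Fin.sum_univ_eq_sum_range b]

lemma sum_range_dotProduct_eq_dotProduct {T n : ℕ} (u z : ℕ → Fin n → ℝ)
    {zs : Fin T × Fin n → ℝ} (hzs : ∀ p, zs p = z p.1 p.2) :
    ∑ t ∈ range T, u t ⬝ᵥ z t = (fun p : Fin T × Fin n => u p.1 p.2) ⬝ᵥ zs := by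
  rw [← Fin.sum_univ_eq_sum_range (fun t => u t ⬝ᵥ z t), dotProduct, Fintype.sum_prod_type]
  simp only [hzs, dotProduct]

lemma IsDualSol.dotProduct_add_sum_dotProduct {T d m : ℕ}
    {A : ℕ → ℕ → Matrix (Fin d) (Fin d) ℝ} {C : ℕ → Matrix (Fin m) (Fin d) ℝ}
    {u : ℕ → Fin m → ℝ} {f : Fin d → ℝ} {y : ℕ → Fin d → ℝ}
    (hy : IsDualSol T d m A C u f y) {x b : ℕ → Fin d → ℝ} {z w : ℕ → Fin m → ℝ}
    (hx : ∀ t, 1 ≤ t → t ≤ T → x t = (∑ s ∈ Icc 1 t, A t s *ᵥ x (t - s)) + b t)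
    (hz : ∀ t < T, z t = C t *ᵥ x t + w t) :
    f ⬝ᵥ x T + ∑ t ∈ range T, u t ⬝ᵥ z t
      = y 0 ⬝ᵥ x 0 + ∑ t ∈ Icc 1 T, y t ⬝ᵥ b t + ∑ t ∈ range T, u t ⬝ᵥ w t := by
  have htelescope : ∑ t ∈ Icc 1 T, y t ⬝ᵥ x t - ∑ t ∈ range T, y t ⬝ᵥ x t
      = y T ⬝ᵥ x T - y 0 ⬝ᵥ x 0 := by
    rw [sum_Icc_one_eq_sum_range, ← Finset.sum_sub_distrib,
      Finset.sum_range_sub (fun t => y t ⬝ᵥ x t)]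
  have hforward : ∑ t ∈ Icc 1 T, y t ⬝ᵥ x t
      = ∑ t ∈ Icc 1 T, ∑ s ∈ Icc 1 t, y t ᵥ* A t s ⬝ᵥ x (t - s) + ∑ t ∈ Icc 1 T, y t ⬝ᵥ b t := by
    rw [← Finset.sum_add_distrib]
    refine Finset.sum_congr rfl fun t ht => ?_
    obtain ⟨h1, h2⟩ := Finset.mem_Icc.mp ht
    simp only [hx t h1 h2, dotProduct_add, dotProduct_sum, dotProduct_mulVec]
  have hbackward : ∑ t ∈ range T, y t ⬝ᵥ x t
      = ∑ t ∈ range T, ∑ s ∈ Icc 1 (T - t), y (t + s) ᵥ* A (t + s) s ⬝ᵥ x t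
        + ∑ t ∈ range T, u t ⬝ᵥ C t *ᵥ x t := by
    rw [← Finset.sum_add_distrib]
    refine Finset.sum_congr rfl fun t ht => ?_
    simp only [hy.2 t (Finset.mem_range.mp ht), add_dotProduct, sum_dotProduct,
      mulVec_transpose, dotProduct_mulVec]
  have hobs : ∑ t ∈ range T, u t ⬝ᵥ z t
      = ∑ t ∈ range T, u t ⬝ᵥ C t *ᵥ x t + ∑ t ∈ range T, u t ⬝ᵥ w t := by
    rw [← Finset.sum_add_distrib]
    exact Finset.sum_congr rfl fun t ht => by rw [hz t (Finset.mem_range.mp ht), dotProduct_add]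
  rw [hforward, hbackward, sum_Icc_sum_Icc_eq_sum_range_sum_Icc T
    (fun t s => y t ᵥ* A t s ⬝ᵥ x (t - s)), hy.1] at htelescope
  simp only [add_tsub_cancel_right] at htelescope
  rw [hobs]
  linarith

section LinearPrediction

variable {Ω ι κ : Type*} [MeasurableSpace Ω] {μ : Measure Ω}

variable [Fintype ι]

lemma memLp_dotProduct {V : Ω → ι → ℝ} (hV : ∀ i, MemLp (V · i) 2 μ) (a : ι → ℝ) :
    MemLp (fun ω => a ⬝ᵥ V ω) 2 μ :=
  memLp_finsetSum _ fun i _ => (hV i).const_mul (a i)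

lemma integral_dotProduct {V : Ω → ι → ℝ} (hV : ∀ i, Integrable (V · i) μ) (a : ι → ℝ) :
    ∫ ω, a ⬝ᵥ V ω ∂μ = a ⬝ᵥ meanVec μ V := by
  simp only [dotProduct]
  rw [integral_finsetSum _ fun i _ => (hV i).const_mul (a i)]
  simp only [integral_const_mul, meanVec]

lemma integral_dotProduct_sub_dotProduct [Fintype κ] {V : Ω → κ → ℝ} {Z : Ω → ι → ℝ}
    (hV : ∀ i, Integrable (V · i) μ) (hZ : ∀ p, Integrable (Z · p) μ) (a : κ → ℝ) (b : ι → ℝ) :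
    ∫ ω, (a ⬝ᵥ V ω - b ⬝ᵥ Z ω) ∂μ = a ⬝ᵥ meanVec μ V - b ⬝ᵥ meanVec μ Z := by
  have haV : Integrable (fun ω => a ⬝ᵥ V ω) μ :=
    integrable_finsetSum _ fun i _ => (hV i).const_mul (a i)
  have hbZ : Integrable (fun ω => b ⬝ᵥ Z ω) μ :=
    integrable_finsetSum _ fun p _ => (hZ p).const_mul (b p)
  rw [integral_sub haV hbZ, integral_dotProduct hV, integral_dotProduct hZ]

lemma covariance_dotProduct_left [IsFiniteMeasure μ] {V : Ω → ι → ℝ} {Y : Ω → ℝ}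
    (hV : ∀ i, MemLp (V · i) 2 μ) (hY : MemLp Y 2 μ) (a : ι → ℝ) :
    cov[fun ω => a ⬝ᵥ V ω, Y; μ] = ∑ i, a i * cov[(V · i), Y; μ] := by
  simp only [dotProduct]
  rw [covariance_fun_sum_left (fun i => (hV i).const_mul (a i)) hY]
  simp only [covariance_const_mul_left]

lemma covariance_dotProduct_left_eq_vecMul [IsFiniteMeasure μ] [Fintype κ]
    {V : Ω → ι → ℝ} {Z : Ω → κ → ℝ}
    (hV : ∀ i, MemLp (V · i) 2 μ) (hZ : ∀ j, MemLp (Z · j) 2 μ) (a : ι → ℝ) (j : κ) :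
    cov[fun ω => a ⬝ᵥ V ω, (Z · j); μ] = (a ᵥ* covMat μ V Z) j :=
  covariance_dotProduct_left hV (hZ j) a

lemma variance_dotProduct [IsFiniteMeasure μ] {V : Ω → ι → ℝ}
    (hV : ∀ i, MemLp (V · i) 2 μ) (a : ι → ℝ) :
    Var[fun ω => a ⬝ᵥ V ω; μ] = a ⬝ᵥ covMat μ V V *ᵥ a := by
  rw [← covariance_self (memLp_dotProduct hV a).aemeasurable,
    covariance_dotProduct_left hV (memLp_dotProduct hV a)]
  refine Finset.sum_congr rfl fun i _ => congrArg (a i * ·) ?_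
  rw [covariance_comm, covariance_dotProduct_left hV (hV i)]
  exact Finset.sum_congr rfl fun j _ => by rw [mul_comm, covariance_comm]; rfl

-- `M Σ_ZZ = Σ_VZ` are the normal equations: they make the error uncorrelated with `Z`.
lemma variance_sub_vecMul_dotProduct_le [IsFiniteMeasure μ] [Fintype κ]
    {V : Ω → κ → ℝ} {Z : Ω → ι → ℝ} (hV : ∀ i, MemLp (V · i) 2 μ)
    (hZ : ∀ p, MemLp (Z · p) 2 μ) {M : Matrix κ ι ℝ} (hM : M * covMat μ Z Z = covMat μ V Z)
    (a : κ → ℝ) (w : ι → ℝ) :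
    Var[fun ω => a ⬝ᵥ V ω - (a ᵥ* M) ⬝ᵥ Z ω; μ] ≤ Var[fun ω => a ⬝ᵥ V ω + w ⬝ᵥ Z ω; μ] := by
  set E := fun ω => a ⬝ᵥ V ω - (a ᵥ* M) ⬝ᵥ Z ω
  have hE : MemLp E 2 μ := (memLp_dotProduct hV a).sub (memLp_dotProduct hZ _)
  have horth : ∀ p, cov[E, (Z · p); μ] = 0 := fun p => by
    rw [covariance_fun_sub_left (memLp_dotProduct hV a) (memLp_dotProduct hZ _) (hZ p),
      covariance_dotProduct_left_eq_vecMul hV hZ, covariance_dotProduct_left_eq_vecMul hZ hZ,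
      vecMul_vecMul, hM, sub_self]
  have hsplit : (fun ω => a ⬝ᵥ V ω + w ⬝ᵥ Z ω) = E + fun ω => (w + a ᵥ* M) ⬝ᵥ Z ω := by
    ext ω; simp only [E, Pi.add_apply, add_dotProduct]; ring
  rw [hsplit, variance_add hE (memLp_dotProduct hZ _), covariance_comm,
    covariance_dotProduct_left hZ hE]
  simp only [covariance_comm _ E, horth, mul_zero, Finset.sum_const_zero, add_zero]
  exact le_add_of_nonneg_right (variance_nonneg _ _)

end LinearPrediction

section StateSpaceModel

variable {Ω : Type*} {T d m : ℕ}

def noiseFunctional (T d m : ℕ) (u : ℕ → Fin m → ℝ) (y : ℕ → Fin d → ℝ) :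
    (i : Fin (T + 1) ⊕ Fin T) → noiseType d m i → ℝ
  | .inl j => fun v => y j ⬝ᵥ v
  | .inr t => fun v => u t ⬝ᵥ v

lemma measurable_noiseFunctional (u : ℕ → Fin m → ℝ) (y : ℕ → Fin d → ℝ)
    (i : Fin (T + 1) ⊕ Fin T) :
    Measurable[noiseMS T d m i] (noiseFunctional T d m u y i) := by
  rcases i with j | t
  · exact (continuous_const.dotProduct continuous_id : Continuous (y j ⬝ᵥ ·)).measurable
  · exact (continuous_const.dotProduct continuous_id : Continuous (u t ⬝ᵥ ·)).measurable

def noisePairing (T d m : ℕ) (X0 : Ω → Fin d → ℝ) (B : ℕ → Ω → Fin d → ℝ)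
    (W : ℕ → Ω → Fin m → ℝ) (u : ℕ → Fin m → ℝ) (y : ℕ → Fin d → ℝ) (ω : Ω) : ℝ :=
  y 0 ⬝ᵥ X0 ω + ∑ t ∈ Icc 1 T, y t ⬝ᵥ B t ω + ∑ t ∈ range T, u t ⬝ᵥ W t ω

lemma noisePairing_eq_sum (X0 : Ω → Fin d → ℝ) (B : ℕ → Ω → Fin d → ℝ)
    (W : ℕ → Ω → Fin m → ℝ) (u : ℕ → Fin m → ℝ) (y : ℕ → Fin d → ℝ) (ω : Ω) :
    noisePairing T d m X0 B W u y ω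
      = ∑ i, noiseFunctional T d m u y i (noiseFamily T d m X0 B W i ω) :=
  (sum_fin_succ_sum_fin _ _ _ _ (by simp [noiseFunctional, noiseFamily])
    (fun j => by simp [noiseFunctional, noiseFamily]) (fun t => rfl)).symm

variable [MeasurableSpace Ω] {μ : Measure Ω}

lemma memLp_of_state_recursion {A : ℕ → ℕ → Matrix (Fin d) (Fin d) ℝ}
    {X B : ℕ → Ω → Fin d → ℝ}
    (hX : ∀ t, 1 ≤ t → t ≤ T → ∀ ω, X t ω = (∑ s ∈ Icc 1 t, A t s *ᵥ X (t - s) ω) + B t ω)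
    (hX0 : ∀ i, MemLp (X 0 · i) 2 μ) (hB : ∀ t, 1 ≤ t → t ≤ T → ∀ i, MemLp (B t · i) 2 μ) :
    ∀ t ≤ T, ∀ i, MemLp (X t · i) 2 μ := by
  intro t
  induction t using Nat.strong_induction_on with
  | _ t ih =>
    intro ht i
    rcases Nat.eq_zero_or_pos t with rfl | ht1
    · exact hX0 i
    · simp only [hX t ht1 ht, Pi.add_apply, Finset.sum_apply]
      refine (memLp_finsetSum _ fun s hs => ?_).add (hB t ht1 ht i)
      have hs := Finset.mem_Icc.mp hs
      exact memLp_dotProduct (ih (t - s) (by omega) (by omega)) _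

variable {X0 : Ω → Fin d → ℝ} {B : ℕ → Ω → Fin d → ℝ} {W : ℕ → Ω → Fin m → ℝ}

lemma memLp_noiseFunctional_noiseFamily (hX0 : ∀ i, MemLp (X0 · i) 2 μ)
    (hB : ∀ t, 1 ≤ t → t ≤ T → ∀ i, MemLp (B t · i) 2 μ)
    (hW : ∀ t < T, ∀ j, MemLp (W t · j) 2 μ) (u : ℕ → Fin m → ℝ) (y : ℕ → Fin d → ℝ) :
    ∀ i, MemLp (fun ω => noiseFunctional T d m u y i (noiseFamily T d m X0 B W i ω)) 2 μ
  | .inl j => by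
    cases j using Fin.cases with
    | zero => simpa [noiseFunctional, noiseFamily] using memLp_dotProduct hX0 (y 0)
    | succ j => simpa [noiseFunctional, noiseFamily] using
        memLp_dotProduct (hB (j + 1) (by omega) (by omega)) (y (j + 1))
  | .inr t => memLp_dotProduct (hW t t.isLt) _

lemma integral_noisePairing [IsProbabilityMeasure μ] {μ0 : Fin d → ℝ}
    (hX0 : ∀ i, MemLp (X0 · i) 2 μ) (hB : ∀ t, 1 ≤ t → t ≤ T → ∀ i, MemLp (B t · i) 2 μ)
    (hW : ∀ t < T, ∀ j, MemLp (W t · j) 2 μ) (hX0mean : ∀ i, ∫ ω, X0 ω i ∂μ = μ0 i)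
    (hBmean : ∀ t, 1 ≤ t → t ≤ T → ∀ i, ∫ ω, B t ω i ∂μ = 0)
    (hWmean : ∀ t < T, ∀ j, ∫ ω, W t ω j ∂μ = 0) (u : ℕ → Fin m → ℝ) (y : ℕ → Fin d → ℝ) :
    ∫ ω, noisePairing T d m X0 B W u y ω ∂μ = y 0 ⬝ᵥ μ0 := by
  simp only [noisePairing_eq_sum]
  rw [integral_finsetSum _ fun i _ =>
    (memLp_noiseFunctional_noiseFamily hX0 hB hW u y i).integrable one_le_two]
  have hmean : ∀ {n : ℕ} {V : Ω → Fin n → ℝ} {c : Fin n → ℝ},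
      (∀ i, MemLp (V · i) 2 μ) → (∀ i, ∫ ω, V ω i ∂μ = c i) →
      ∀ a : Fin n → ℝ, ∫ ω, a ⬝ᵥ V ω ∂μ = a ⬝ᵥ c := fun hV hc a => by
    rw [integral_dotProduct (fun i => (hV i).integrable one_le_two)]
    exact congrArg _ (funext hc)
  rw [sum_fin_succ_sum_fin _ (y 0 ⬝ᵥ μ0) 0 0 ?_ (fun j => ?_) (fun t => ?_)]
  · simp
  · simpa [noiseFunctional, noiseFamily] using hmean hX0 hX0mean (y 0)
  · simpa [noiseFunctional, noiseFamily] using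
      hmean (hB (j + 1) (by omega) (by omega)) (hBmean (j + 1) (by omega) (by omega)) (y (j + 1))
  · simpa [noiseFunctional, noiseFamily] using
      hmean (hW t t.isLt) (hWmean t t.isLt) (u t)

lemma variance_noisePairing [IsProbabilityMeasure μ] {μ0 : Fin d → ℝ}
    {Sig0 : Matrix (Fin d) (Fin d) ℝ} {Q : ℕ → Matrix (Fin d) (Fin d) ℝ}
    {R : ℕ → Matrix (Fin m) (Fin m) ℝ}
    (hindep : iIndepFun (m := noiseMS T d m) (noiseFamily T d m X0 B W) μ)
    (hX0 : ∀ i, MemLp (X0 · i) 2 μ) (hB : ∀ t, 1 ≤ t → t ≤ T → ∀ i, MemLp (B t · i) 2 μ)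
    (hW : ∀ t < T, ∀ j, MemLp (W t · j) 2 μ) (hX0mean : ∀ i, ∫ ω, X0 ω i ∂μ = μ0 i)
    (hBmean : ∀ t, 1 ≤ t → t ≤ T → ∀ i, ∫ ω, B t ω i ∂μ = 0)
    (hWmean : ∀ t < T, ∀ j, ∫ ω, W t ω j ∂μ = 0)
    (hX0cov : ∀ i i', ∫ ω, (X0 ω i - μ0 i) * (X0 ω i' - μ0 i') ∂μ = Sig0 i i')
    (hBcov : ∀ t, 1 ≤ t → t ≤ T → ∀ i i', ∫ ω, B t ω i * B t ω i' ∂μ = Q t i i')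
    (hWcov : ∀ t < T, ∀ j j', ∫ ω, W t ω j * W t ω j' ∂μ = R t j j')
    (u : ℕ → Fin m → ℝ) (y : ℕ → Fin d → ℝ) :
    Var[noisePairing T d m X0 B W u y; μ] = 2 * dualCost T d m Sig0 Q R y u := by
  have hsum : noisePairing T d m X0 B W u y
      = ∑ i, fun ω => noiseFunctional T d m u y i (noiseFamily T d m X0 B W i ω) := by
    ext ω; rw [Finset.sum_apply, noisePairing_eq_sum]
  rw [hsum, IndepFun.variance_sum (fun i _ => memLp_noiseFunctional_noiseFamily hX0 hB hW u y i)
    fun i _ j _ hij => (hindep.comp _ (measurable_noiseFunctional u y)).indepFun hij]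
  rw [sum_fin_succ_sum_fin _ (y 0 ⬝ᵥ Sig0 *ᵥ y 0) (fun t => y t ⬝ᵥ Q t *ᵥ y t)
    (fun t => u t ⬝ᵥ R t *ᵥ u t) ?_ (fun j => ?_) (fun t => ?_)]
  · simp only [dualCost, mul_add, Finset.mul_sum, ← mul_assoc,
      mul_one_div_cancel (two_ne_zero (α := ℝ)), one_mul]
  · have hcov : covMat μ X0 X0 = Sig0 := by
      ext i i'; simp only [covMat, meanVec, of_apply, hX0mean, hX0cov]
    simpa [noiseFunctional, noiseFamily, hcov] using variance_dotProduct hX0 (y 0)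
  · have hcov : covMat μ (B (j + 1)) (B (j + 1)) = Q (j + 1) := by
      ext i i'
      simp only [covMat, meanVec, of_apply, hBmean (j + 1) (by omega) (by omega), sub_zero,
        hBcov (j + 1) (by omega) (by omega)]
    simpa [noiseFunctional, noiseFamily, hcov] using
      variance_dotProduct (hB (j + 1) (by omega) (by omega)) (y (j + 1))
  · have hcov : covMat μ (W t) (W t) = R t := by
      ext j j'
      simp only [covMat, meanVec, of_apply, hWmean t t.isLt, sub_zero, hWcov t t.isLt]
    simpa [noiseFunctional, noiseFamily, hcov] using variance_dotProduct (hW t t.isLt) (u t)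

variable [IsProbabilityMeasure μ] {A : ℕ → ℕ → Matrix (Fin d) (Fin d) ℝ}
  {C : ℕ → Matrix (Fin m) (Fin d) ℝ} {X : ℕ → Ω → Fin d → ℝ} {Z : ℕ → Ω → Fin m → ℝ}
  {μ0 : Fin d → ℝ} {u : ℕ → Fin m → ℝ} {f : Fin d → ℝ} {y : ℕ → Fin d → ℝ}

lemma IsDualSol.two_mul_dualCost_eq_variance {Sig0 : Matrix (Fin d) (Fin d) ℝ}
    {Q : ℕ → Matrix (Fin d) (Fin d) ℝ} {R : ℕ → Matrix (Fin m) (Fin m) ℝ}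
    (hy : IsDualSol T d m A C u f y)
    (hindep : iIndepFun (m := noiseMS T d m) (noiseFamily T d m (X 0) B W) μ)
    (hX0 : ∀ i, MemLp (X 0 · i) 2 μ) (hB : ∀ t, 1 ≤ t → t ≤ T → ∀ i, MemLp (B t · i) 2 μ)
    (hW : ∀ t < T, ∀ j, MemLp (W t · j) 2 μ) (hX0mean : ∀ i, ∫ ω, X 0 ω i ∂μ = μ0 i)
    (hBmean : ∀ t, 1 ≤ t → t ≤ T → ∀ i, ∫ ω, B t ω i ∂μ = 0)
    (hWmean : ∀ t < T, ∀ j, ∫ ω, W t ω j ∂μ = 0)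
    (hX0cov : ∀ i i', ∫ ω, (X 0 ω i - μ0 i) * (X 0 ω i' - μ0 i') ∂μ = Sig0 i i')
    (hBcov : ∀ t, 1 ≤ t → t ≤ T → ∀ i i', ∫ ω, B t ω i * B t ω i' ∂μ = Q t i i')
    (hWcov : ∀ t < T, ∀ j j', ∫ ω, W t ω j * W t ω j' ∂μ = R t j j')
    (hX : ∀ t, 1 ≤ t → t ≤ T → ∀ ω, X t ω = (∑ s ∈ Icc 1 t, A t s *ᵥ X (t - s) ω) + B t ω)
    (hZ : ∀ t < T, ∀ ω, Z t ω = C t *ᵥ X t ω + W t ω) :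
    2 * dualCost T d m Sig0 Q R y u
      = Var[fun ω => f ⬝ᵥ X T ω + ∑ t ∈ range T, u t ⬝ᵥ Z t ω; μ] := by
  rw [funext fun ω => hy.dotProduct_add_sum_dotProduct (hX · · · ω) (hZ · · ω)]
  exact (variance_noisePairing hindep hX0 hB hW hX0mean hBmean hWmean hX0cov hBcov hWcov u y).symm

lemma IsDualSol.integral_eq (hy : IsDualSol T d m A C u f y)
    (hX0 : ∀ i, MemLp (X 0 · i) 2 μ) (hB : ∀ t, 1 ≤ t → t ≤ T → ∀ i, MemLp (B t · i) 2 μ)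
    (hW : ∀ t < T, ∀ j, MemLp (W t · j) 2 μ) (hX0mean : ∀ i, ∫ ω, X 0 ω i ∂μ = μ0 i)
    (hBmean : ∀ t, 1 ≤ t → t ≤ T → ∀ i, ∫ ω, B t ω i ∂μ = 0)
    (hWmean : ∀ t < T, ∀ j, ∫ ω, W t ω j ∂μ = 0)
    (hX : ∀ t, 1 ≤ t → t ≤ T → ∀ ω, X t ω = (∑ s ∈ Icc 1 t, A t s *ᵥ X (t - s) ω) + B t ω)
    (hZ : ∀ t < T, ∀ ω, Z t ω = C t *ᵥ X t ω + W t ω) :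
    ∫ ω, (f ⬝ᵥ X T ω + ∑ t ∈ range T, u t ⬝ᵥ Z t ω) ∂μ = y 0 ⬝ᵥ μ0 := by
  rw [funext fun ω => hy.dotProduct_add_sum_dotProduct (hX · · · ω) (hZ · · ω)]
  exact integral_noisePairing hX0 hB hW hX0mean hBmean hWmean u y

end StateSpaceModel

theorem dual_filter_equals_batch_smoothing_general
    (T d m : ℕ)
    {Ω : Type*} [MeasurableSpace Ω] (μ : Measure Ω) [IsProbabilityMeasure μ]
    (A : ℕ → ℕ → Matrix (Fin d) (Fin d) ℝ)
    (C : ℕ → Matrix (Fin m) (Fin d) ℝ)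
    (X B : ℕ → Ω → Fin d → ℝ) (Z W : ℕ → Ω → Fin m → ℝ)
    (μ0 : Fin d → ℝ) (Sig0 : Matrix (Fin d) (Fin d) ℝ)
    (Q : ℕ → Matrix (Fin d) (Fin d) ℝ) (R : ℕ → Matrix (Fin m) (Fin m) ℝ)
    -- measurability and mutual independence of `X_0, B_1, …, B_T, W_0, …, W_{T-1}`
    (hindep : iIndepFun (m := noiseMS T d m) (noiseFamily T d m (X 0) B W) μ)
    -- square integrability (componentwise)
    (hX0L2 : ∀ i, MemLp (fun ω => X 0 ω i) 2 μ)
    (hBL2 : ∀ t, 1 ≤ t → t ≤ T → ∀ i, MemLp (fun ω => B t ω i) 2 μ)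
    (hWL2 : ∀ t < T, ∀ j, MemLp (fun ω => W t ω j) 2 μ)
    -- first moments
    (hX0mean : ∀ i, (∫ ω, X 0 ω i ∂μ) = μ0 i)
    (hBmean : ∀ t, 1 ≤ t → t ≤ T → ∀ i, (∫ ω, B t ω i ∂μ) = 0)
    (hWmean : ∀ t < T, ∀ j, (∫ ω, W t ω j ∂μ) = 0)
    -- covariances
    (hX0cov : ∀ i i', (∫ ω, (X 0 ω i - μ0 i) * (X 0 ω i' - μ0 i') ∂μ) = Sig0 i i')
    (hBcov : ∀ t, 1 ≤ t → t ≤ T → ∀ i i',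
      (∫ ω, B t ω i * B t ω i' ∂μ) = Q t i i')
    (hWcov : ∀ t < T, ∀ j j', (∫ ω, W t ω j * W t ω j' ∂μ) = R t j j')
    -- the hidden-state recursion and the observation model
    (hX : ∀ t, 1 ≤ t → t ≤ T → ∀ ω,
      X t ω = (∑ s ∈ Finset.Icc 1 t, (A t s).mulVec (X (t - s) ω)) + B t ω)
    (hZ : ∀ t < T, ∀ ω, Z t ω = (C t).mulVec (X t ω) + W t ω)
    -- the stacked observation vector `Z_{0:T-1}`
    (Zvec : Ω → Fin T × Fin m → ℝ)
    (hZvec : ∀ ω p, Zvec ω p = Z p.1.val ω p.2)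
    -- invertibility of `Σ_ZZ` and the batch-smoothing weight matrix `𝒲`
    (hinv : IsUnit (covMat μ Zvec Zvec))
    (Wmat : Matrix (Fin d) (Fin T × Fin m) ℝ)
    (hWmat : Wmat = covMat μ (X T) Zvec * (covMat μ Zvec Zvec)⁻¹)
    -- the control `û_t := − 𝒲_tᵀ f` and its dual-state solution `y`
    (f : Fin d → ℝ) (uhat : ℕ → Fin m → ℝ)
    (huhat : ∀ t (h : t < T), uhat t = fun j => -((Wmatᵀ).mulVec f (⟨t, h⟩, j)))
    (y : ℕ → Fin d → ℝ)
    (hy : IsDualSol T d m A C uhat f y) :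
    (∀ (u : ℕ → Fin m → ℝ) (y' : ℕ → Fin d → ℝ),
        IsDualSol T d m A C u f y' →
        dualCost T d m Sig0 Q R y uhat ≤ dualCost T d m Sig0 Q R y' u)
    ∧ (∀ᵐ ω ∂μ,
        y 0 ⬝ᵥ μ0 - (∑ t ∈ Finset.range T, uhat t ⬝ᵥ Z t ω)
          = f ⬝ᵥ (meanVec μ (X T)
              + Wmat.mulVec (fun p => Zvec ω p - meanVec μ Zvec p))) := by
  have hXL2 := memLp_of_state_recursion hX hX0L2 hBL2
  have hZL2 : ∀ p, MemLp (Zvec · p) 2 μ := fun p => by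
    simp only [hZvec, hZ p.1 p.1.isLt, Pi.add_apply]
    exact (memLp_dotProduct (hXL2 p.1 p.1.isLt.le) _).add (hWL2 p.1 p.1.isLt p.2)
  have hobs := fun u ω => sum_range_dotProduct_eq_dotProduct u (Z · ω) (hZvec ω)
  have hstack : (fun p : Fin T × Fin m => uhat p.1 p.2) = -(f ᵥ* Wmat) := by
    ext ⟨t, j⟩; simp [huhat t t.isLt, mulVec_transpose]
  have hWZ : Wmat * covMat μ Zvec Zvec = covMat μ (X T) Zvec := by
    rw [hWmat, Matrix.mul_assoc, nonsing_inv_mul _ ((isUnit_iff_isUnit_det _).mp hinv),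
      Matrix.mul_one]
  refine ⟨fun u y' hy' => ?_, Filter.Eventually.of_forall fun ω => ?_⟩
  · have hopt := variance_sub_vecMul_dotProduct_le (hXL2 T le_rfl) hZL2 hWZ f (fun p => u p.1 p.2)
    have hcost := hy'.two_mul_dualCost_eq_variance hindep hX0L2 hBL2 hWL2 hX0mean hBmean hWmean
      hX0cov hBcov hWcov hX hZ
    have hcost_opt := hy.two_mul_dualCost_eq_variance hindep hX0L2 hBL2 hWL2 hX0mean hBmean
      hWmean hX0cov hBcov hWcov hX hZ
    simp only [hobs, hstack, neg_dotProduct, ← sub_eq_add_neg] at hcost hcost_opt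
    linarith
  · have hmean := hy.integral_eq hX0L2 hBL2 hWL2 hX0mean hBmean hWmean hX hZ
    simp only [hobs, hstack, neg_dotProduct, ← sub_eq_add_neg] at hmean
    rw [integral_dotProduct_sub_dotProduct (fun i => (hXL2 T le_rfl i).integrable one_le_two)
      fun p => (hZL2 p).integrable one_le_two] at hmean
    rw [hobs, hstack, ← hmean, dotProduct_add, dotProduct_mulVec, neg_dotProduct,
      show (fun p => Zvec ω p - meanVec μ Zvec p) = Zvec ω - meanVec μ Zvec from rfl,
      dotProduct_sub]
    ring

/-- Equivalence of the dual filter and batch smoothing: under the stochastic model,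
assume `Σ_ZZ := Cov(Z_{0:T-1})` is invertible, and let
`𝒲 := Cov(X_T, Z_{0:T-1}) Σ_ZZ⁻¹` with blocks `𝒲_t`. For `f ∈ ℝ^d`, define the
control `û` by `û_t := − 𝒲_tᵀ f`. Then `û` is a global minimizer of the dual cost
`J_T(·; f)` over `𝒰`, and the corresponding estimator
`S_T = y_0ᵀ μ0 − ∑_{t=0}^{T-1} û_tᵀ Z_t` (with `y` the dual-state solution for
`(û, f)`) equals the affine MMSE prediction
`fᵀ ( E[X_T] + 𝒲 (Z_{0:T-1} − E[Z_{0:T-1}]) )` almost surely. -/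
theorem dual_filter_equals_batch_smoothing
    (T d m : ℕ) (hT : 1 ≤ T) (hd : 1 ≤ d) (hm : 1 ≤ m)
    {Ω : Type*} [MeasurableSpace Ω] (μ : Measure Ω) [IsProbabilityMeasure μ]
    (A : ℕ → ℕ → Matrix (Fin d) (Fin d) ℝ)
    (C : ℕ → Matrix (Fin m) (Fin d) ℝ)
    (X B : ℕ → Ω → Fin d → ℝ) (Z W : ℕ → Ω → Fin m → ℝ)
    (μ0 : Fin d → ℝ) (Sig0 : Matrix (Fin d) (Fin d) ℝ)
    (Q : ℕ → Matrix (Fin d) (Fin d) ℝ) (R : ℕ → Matrix (Fin m) (Fin m) ℝ)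
    -- measurability and mutual independence of `X_0, B_1, …, B_T, W_0, …, W_{T-1}`
    (hmeas : ∀ i, @Measurable Ω (noiseType d m i) _ (noiseMS T d m i)
      (noiseFamily T d m (X 0) B W i))
    (hindep : iIndepFun (m := noiseMS T d m) (noiseFamily T d m (X 0) B W) μ)
    -- square integrability (componentwise)
    (hX0L2 : ∀ i, MemLp (fun ω => X 0 ω i) 2 μ)
    (hBL2 : ∀ t, 1 ≤ t → t ≤ T → ∀ i, MemLp (fun ω => B t ω i) 2 μ)
    (hWL2 : ∀ t < T, ∀ j, MemLp (fun ω => W t ω j) 2 μ)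
    -- first moments
    (hX0mean : ∀ i, (∫ ω, X 0 ω i ∂μ) = μ0 i)
    (hBmean : ∀ t, 1 ≤ t → t ≤ T → ∀ i, (∫ ω, B t ω i ∂μ) = 0)
    (hWmean : ∀ t < T, ∀ j, (∫ ω, W t ω j ∂μ) = 0)
    -- covariances
    (hX0cov : ∀ i i', (∫ ω, (X 0 ω i - μ0 i) * (X 0 ω i' - μ0 i') ∂μ) = Sig0 i i')
    (hBcov : ∀ t, 1 ≤ t → t ≤ T → ∀ i i',
      (∫ ω, B t ω i * B t ω i' ∂μ) = Q t i i')
    (hWcov : ∀ t < T, ∀ j j', (∫ ω, W t ω j * W t ω j' ∂μ) = R t j j')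
    -- the hidden-state recursion and the observation model
    (hX : ∀ t, 1 ≤ t → t ≤ T → ∀ ω,
      X t ω = (∑ s ∈ Finset.Icc 1 t, (A t s).mulVec (X (t - s) ω)) + B t ω)
    (hZ : ∀ t < T, ∀ ω, Z t ω = (C t).mulVec (X t ω) + W t ω)
    -- the stacked observation vector `Z_{0:T-1}`
    (Zvec : Ω → Fin T × Fin m → ℝ)
    (hZvec : ∀ ω p, Zvec ω p = Z p.1.val ω p.2)
    -- invertibility of `Σ_ZZ` and the batch-smoothing weight matrix `𝒲`
    (hinv : IsUnit (covMat μ Zvec Zvec))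
    (Wmat : Matrix (Fin d) (Fin T × Fin m) ℝ)
    (hWmat : Wmat = covMat μ (X T) Zvec * (covMat μ Zvec Zvec)⁻¹)
    -- the control `û_t := − 𝒲_tᵀ f` and its dual-state solution `y`
    (f : Fin d → ℝ) (uhat : ℕ → Fin m → ℝ)
    (huhat : ∀ t (h : t < T), uhat t = fun j => -((Wmatᵀ).mulVec f (⟨t, h⟩, j)))
    (y : ℕ → Fin d → ℝ)
    (hy : IsDualSol T d m A C uhat f y) :
    (∀ (u : ℕ → Fin m → ℝ) (y' : ℕ → Fin d → ℝ),
        IsDualSol T d m A C u f y' →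
        dualCost T d m Sig0 Q R y uhat ≤ dualCost T d m Sig0 Q R y' u)
    ∧ (∀ᵐ ω ∂μ,
        y 0 ⬝ᵥ μ0 - (∑ t ∈ Finset.range T, uhat t ⬝ᵥ Z t ω)
          = f ⬝ᵥ (meanVec μ (X T)
              + Wmat.mulVec (fun p => Zvec ω p - meanVec μ Zvec p))) :=
  dual_filter_equals_batch_smoothing_general T d m μ A C X B Z W μ0 Sig0 Q R hindep hX0L2 hBL2 hWL2
    hX0mean hBmean hWmean hX0cov hBcov hWcov hX hZ Zvec hZvec hinv Wmat hWmat f uhat huhat y hy
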